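/- arXiv:1609.04780 — 3 statements merged into one kernel-verified Lean document; each statement's English description precedes it below -/
import Mathlib

section
/- For every integer j ≥ 2, the polynomials G_j and f_j have no common root: if ω ∈ ℂ satisfies G_j(ω) = 0, then f_j(ω) ≠ 0. -/
open Polynomial

/-- `f 0 = 0`, `f 1 = 1`, `f (j+2) = X * f (j+1) - f j`. -/
noncomputable def f : ℕ → Polynomial ℤ
  | 0 => 0
  | 1 => 1
  | (j + 2) => X * f (j + 1) - f j

/-- `g j = f j - f (j-1)`. -/
noncomputable def g (j : ℕ) : Polynomial ℤ := f j - f (j - 1)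

/-- `G j = g_{j+1}' * g_j - g_{j+1} * g_j'`. -/
noncomputable def G (j : ℕ) : Polynomial ℤ :=
  derivative (g (j + 1)) * g j - g (j + 1) * derivative (g j)

lemma f_rec (j : ℕ) : f (j + 2) = X * f (j + 1) - f j := by rw [f]

lemma catalan_id (j : ℕ) : f (j + 2) * f j = f (j + 1) ^ 2 - 1 := by
  induction j with
  | zero => simp [f]
  | succ n ih =>
      linear_combination f (n + 1) * f_rec (n + 1) + ih - f (n + 2) * f_rec n

lemma deriv_rec (j : ℕ) :
    derivative (f (j + 2)) = f (j + 1) + X * derivative (f (j + 1)) - derivative (f j) := by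
  rw [f_rec]
  simp [derivative_mul]

lemma fDerivIdent (j : ℕ) :
    (X ^ 2 - 4) * derivative (f (j + 1)) =
      ((j : Polynomial ℤ) + 1) * (f (j + 2) - f j) - X * f (j + 1) := by
  induction j using Nat.twoStepInduction with
  | zero => simp [f]
  | one =>
      norm_num [f]
      ring
  | more n ih1 ih2 =>
      push_cast at ih1 ih2 ⊢
      linear_combination (X ^ 2 - 4) * deriv_rec (n + 1) + X * ih2 - ih1
        - ((n : Polynomial ℤ) + 3) * f_rec (n + 2) + ((n : Polynomial ℤ) + 1) * f_rec n

lemma aeval_two (n : ℕ) : aeval (2 : ℂ) (f n) = n := by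
  induction n using Nat.twoStepInduction with
  | zero => simp [f]
  | one => simp [f]
  | more n ih1 ih2 =>
      rw [f_rec]
      simp only [map_sub, map_mul, aeval_X, ih1, ih2]
      push_cast
      ring

theorem G_f_no_common_root (j : ℕ) (hj : 2 ≤ j) (ω : ℂ)
    (hω : aeval ω (G j) = 0) : aeval ω (f j) ≠ 0 := by
  intro hf
  obtain ⟨k, rfl⟩ : ∃ k, j = k + 2 := ⟨j - 2, by omega⟩
  -- abbreviations
  set a : ℕ → ℂ := fun n => aeval ω (f n) with ha
  set d : ℕ → ℂ := fun n => aeval ω (derivative (f n)) with hd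
  have hfa : a (k + 2) = 0 := hf
  have e1 : a (k + 3) = ω * a (k + 2) - a (k + 1) := by
    have := congrArg (aeval ω) (f_rec (k + 1))
    simpa [ha, map_sub, map_mul] using this
  have e2 : a (k + 2) * a k = a (k + 1) ^ 2 - 1 := by
    have := congrArg (aeval ω) (catalan_id k)
    simpa [ha, map_sub, map_mul] using this
  have e3 : (ω ^ 2 - 4) * d (k + 2) =
      ((k : ℂ) + 2) * (a (k + 3) - a (k + 1)) - ω * a (k + 2) := by
    have := congrArg (aeval ω) (fDerivIdent (k + 1))
    simp only [map_sub, map_mul, map_add, map_ofNat, map_one, aeval_X, map_pow,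
      map_natCast, show k + 1 + 1 = k + 2 from rfl, show k + 1 + 2 = k + 3 from rfl] at this
    push_cast at this
    simp only [ha, hd]
    linear_combination this
  have e4 : d (k + 3) = a (k + 2) + ω * d (k + 2) - d (k + 1) := by
    have := congrArg (aeval ω) (deriv_rec (k + 1))
    simpa [ha, hd, map_sub, map_mul, map_add] using this
  have hω' : (d (k + 3) - d (k + 2)) * (a (k + 2) - a (k + 1))
      - (a (k + 3) - a (k + 2)) * (d (k + 2) - d (k + 1)) = 0 := by
    have h := hω
    simp only [G, g, show k + 2 + 1 = k + 3 from rfl, show k + 3 - 1 = k + 2 from rfl,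
      show k + 2 - 1 = k + 1 from rfl, derivative_sub, map_sub, map_mul] at h
    simpa [ha, hd] using h
  set ε := a (k + 1) with hε
  have hε2 : ε ^ 2 = 1 := by
    have h0 : (0 : ℂ) = ε ^ 2 - 1 := by rw [← e2, hfa]; ring
    linear_combination -h0
  have hεne : ε ≠ 0 := by
    intro h
    rw [h] at hε2
    simp at hε2
  have h3 : a (k + 3) = -ε := by rw [e1, hfa]; ring
  have h6 : ε * ((2 - ω) * d (k + 2)) = 0 := by
    rw [hfa, h3, e4, hfa] at hω'
    linear_combination hω'
  rcases mul_eq_zero.mp h6 with h | h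
  · exact hεne h
  rcases mul_eq_zero.mp h with h | hd2
  · -- ω = 2
    have hω2 : ω = 2 := by linear_combination -h
    have h0 : ((k + 2 : ℕ) : ℂ) = 0 := by rw [← aeval_two (k + 2), ← hω2]; exact hf
    have h1 : k + 2 = 0 := by exact_mod_cast h0
    omega
  · -- derivative vanishes
    rw [hfa, h3, hd2] at e3
    have hk : ((k : ℂ) + 2) ≠ 0 := by
      intro hc
      have h9 : ((k + 2 : ℕ) : ℂ) = 0 := by push_cast; linear_combination hc
      have : k + 2 = 0 := by exact_mod_cast h9
      omega
    have : ε = 0 := by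
      have h7 : ((k : ℂ) + 2) * (2 * ε) = 0 := by linear_combination e3
      rcases mul_eq_zero.mp h7 with h8 | h8
      · exact absurd h8 hk
      · rcases mul_eq_zero.mp h8 with h9 | h9
        · norm_num at h9
        · exact h9
    exact hεne this
end

section
/- Let n ≥ 2 and let (r₀, t₀) ∈ ℂ² be a singular point of the curve F = 0, i.e. F(r₀,t₀) = 0, F_r(r₀,t₀) = 0 and F_t(r₀,t₀) = 0. Then G_n(r₀) = 0 and G_n(t₀) = 0. -/
open Polynomial

/-- Evaluation of `F(r,t) = g_{n+1}(r)·g_n(t) − g_n(r)·g_{n+1}(t)` at `(r,t) ∈ ℂ²`. -/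
noncomputable def Fval (n : ℕ) (r t : ℂ) : ℂ :=
  aeval r (g (n + 1)) * aeval t (g n) - aeval r (g n) * aeval t (g (n + 1))

/-- Evaluation of the partial derivative `F_r` at `(r,t) ∈ ℂ²`. -/
noncomputable def Frval (n : ℕ) (r t : ℂ) : ℂ :=
  aeval r (derivative (g (n + 1))) * aeval t (g n)
    - aeval r (derivative (g n)) * aeval t (g (n + 1))

/-- Evaluation of the partial derivative `F_t` at `(r,t) ∈ ℂ²`. -/
noncomputable def Ftval (n : ℕ) (r t : ℂ) : ℂ :=
  aeval r (g (n + 1)) * aeval t (derivative (g n))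
    - aeval r (g n) * aeval t (derivative (g (n + 1)))

lemma g_rec (k : ℕ) : g (k + 3) = X * g (k + 2) - g (k + 1) := by
  simp only [g, show k + 3 - 1 = k + 2 from rfl, show k + 2 - 1 = k + 1 from rfl,
    show k + 1 - 1 = k from rfl]
  rw [show f (k + 3) = X * f (k + 2) - f (k + 1) from rfl,
      show f (k + 2) = X * f (k + 1) - f k from rfl]
  ring

lemma g_no_common_root : ∀ k, ∀ x : ℂ,
    aeval x (g (k + 1)) = 0 → aeval x (g (k + 2)) = 0 → False := by
  intro k
  induction k with
  | zero =>
    intro x h1 _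
    simp [g, f] at h1
  | succ m ih =>
    intro x h1 h2
    rw [g_rec] at h2
    simp only [map_sub, map_mul, aeval_X, h1, mul_zero, zero_sub, neg_eq_zero] at h2
    exact ih x h2 h1

theorem singular_point_root_of_G (n : ℕ) (hn : 2 ≤ n) (r₀ t₀ : ℂ)
    (hF : Fval n r₀ t₀ = 0) (hFr : Frval n r₀ t₀ = 0) (hFt : Ftval n r₀ t₀ = 0) :
    aeval r₀ (G n) = 0 ∧ aeval t₀ (G n) = 0 := by
  obtain ⟨m, rfl⟩ : ∃ m, n = m + 1 := ⟨n - 1, by omega⟩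
  set a := aeval r₀ (g (m + 2)) with ha
  set b := aeval r₀ (g (m + 1)) with hb
  set a' := aeval r₀ (derivative (g (m + 2))) with ha'
  set b' := aeval r₀ (derivative (g (m + 1))) with hb'
  set c := aeval t₀ (g (m + 2)) with hc
  set d := aeval t₀ (g (m + 1)) with hd
  set c' := aeval t₀ (derivative (g (m + 2))) with hc'
  set d' := aeval t₀ (derivative (g (m + 1))) with hd'
  have e1 : a * d - b * c = 0 := hF
  have e2 : a' * d - b' * c = 0 := hFr
  have e3 : a * d' - b * c' = 0 := hFt
  have hGr : aeval r₀ (G (m + 1)) = a' * b - a * b' := by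
    simp only [G, map_sub, map_mul]
    rfl
  have hGt : aeval t₀ (G (m + 1)) = c' * d - c * d' := by
    simp only [G, map_sub, map_mul]
    rfl
  have hcd : ¬ (d = 0 ∧ c = 0) := fun ⟨h1, h2⟩ => g_no_common_root m t₀ h1 h2
  have hab : ¬ (b = 0 ∧ a = 0) := fun ⟨h1, h2⟩ => g_no_common_root m r₀ h1 h2
  constructor
  · rw [hGr]
    rcases not_and_or.mp hcd with h | h
    · have key : d * (a' * b - a * b') = 0 := by linear_combination (-b') * e1 + b * e2
      exact (mul_eq_zero.mp key).resolve_left h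
    · have key : c * (a' * b - a * b') = 0 := by linear_combination (-a') * e1 + a * e2
      exact (mul_eq_zero.mp key).resolve_left h
  · rw [hGt]
    rcases not_and_or.mp hab with h | h
    · have key : b * (c' * d - c * d') = 0 := by linear_combination d' * e1 - d * e3
      exact (mul_eq_zero.mp key).resolve_left h
    · have key : a * (c' * d - c * d') = 0 := by linear_combination c' * e1 - c * e3
      exact (mul_eq_zero.mp key).resolve_left h
end

section
/- For every integer n ≥ 1, every nonzero μ ∈ ℂ and every r ∈ ℂ, with A, B, x, W_n as defined, tr(W_n·B·A⁻¹) = (2 − r)·f_{n−1}(r)·f_n(r)·(x² − 2 − r) + r. -/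
open Polynomial

/-- `A = ((μ, 1), (0, μ⁻¹))`. -/
noncomputable def A (μ : ℂ) : Matrix (Fin 2) (Fin 2) ℂ := !![μ, 1; 0, μ⁻¹]

/-- `B = ((μ, 0), (2 − r, μ⁻¹))`. -/
noncomputable def B (μ r : ℂ) : Matrix (Fin 2) (Fin 2) ℂ := !![μ, 0; 2 - r, μ⁻¹]

/-- `W n = (A B⁻¹)ⁿ (A⁻¹ B)ⁿ`. -/
noncomputable def W (n : ℕ) (μ r : ℂ) : Matrix (Fin 2) (Fin 2) ℂ :=
  (A μ * (B μ r)⁻¹) ^ n * ((A μ)⁻¹ * B μ r) ^ n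

lemma f_eval_rec (r : ℂ) (n : ℕ) :
    aeval r (f (n + 2)) = r * aeval r (f (n + 1)) - aeval r (f n) := by
  rw [show f (n + 2) = X * f (n + 1) - f n from rfl]
  simp [mul_comm]

lemma f_eval_sq (r : ℂ) (n : ℕ) :
    (aeval r (f n)) ^ 2 + (aeval r (f (n + 1))) ^ 2
      - r * aeval r (f n) * aeval r (f (n + 1)) = 1 := by
  induction n with
  | zero => simp [f]
  | succ m ih =>
      rw [f_eval_rec]
      linear_combination ih

lemma pow_formula (M : Matrix (Fin 2) (Fin 2) ℂ) (r : ℂ)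
    (hM : M * M = r • M - 1) (n : ℕ) :
    M ^ (n + 1) = (aeval r (f (n + 1))) • M - (aeval r (f n)) • 1 := by
  induction n with
  | zero => simp [f]
  | succ m ih =>
      rw [pow_succ, ih, f_eval_rec, sub_mul, smul_mul_assoc, smul_mul_assoc, hM,
        one_mul]
      module

lemma Binv (μ r : ℂ) (hμ : μ ≠ 0) : (B μ r)⁻¹ = !![μ⁻¹, 0; -(2 - r), μ] := by
  apply Matrix.inv_eq_right_inv
  rw [B]
  ext i j
  fin_cases i <;> fin_cases j <;>
    simp [Matrix.mul_apply, Fin.sum_univ_two, Matrix.one_apply, hμ]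
  ring

lemma Ainv (μ : ℂ) (hμ : μ ≠ 0) : (A μ)⁻¹ = !![μ⁻¹, -1; 0, μ] := by
  apply Matrix.inv_eq_right_inv
  rw [A]
  ext i j
  fin_cases i <;> fin_cases j <;>
    simp [Matrix.mul_apply, Fin.sum_univ_two, Matrix.one_apply, hμ]

lemma expand4 (a b : ℂ) (C D E : Matrix (Fin 2) (Fin 2) ℂ) :
    (b • C - a • 1) * ((b • D - a • 1) * E)
      = (b * b) • (C * (D * E)) - (a * b) • (C * E) - (a * b) • (D * E)
        + (a * a) • E := by
  simp only [sub_mul, mul_sub, smul_mul_assoc, mul_smul_comm, one_mul, smul_sub,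
    smul_smul]
  module

theorem trace_W_B_Ainv (n : ℕ) (hn : 1 ≤ n) (μ : ℂ) (hμ : μ ≠ 0) (r : ℂ) :
    Matrix.trace (W n μ r * B μ r * (A μ)⁻¹)
      = (2 - r) * aeval r (f (n - 1)) * aeval r (f n) * ((μ + μ⁻¹) ^ 2 - 2 - r) + r := by
  obtain ⟨m, rfl⟩ : ∃ m, n = m + 1 := ⟨n - 1, (Nat.succ_pred_eq_of_pos hn).symm⟩
  simp only [Nat.add_sub_cancel]
  set a := (aeval r (f m) : ℂ) with ha
  set b := (aeval r (f (m + 1)) : ℂ) with hb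
  have key : a ^ 2 + b ^ 2 - r * a * b = 1 := f_eval_sq r m
  have hμ2 : μ * μ⁻¹ = 1 := mul_inv_cancel₀ hμ
  set Cc : Matrix (Fin 2) (Fin 2) ℂ := !![r - 1, μ; (r - 2) * μ⁻¹, 1] with hCc
  set Dc : Matrix (Fin 2) (Fin 2) ℂ := !![r - 1, -μ⁻¹; (2 - r) * μ, 1] with hDc
  set Ec : Matrix (Fin 2) (Fin 2) ℂ := !![1, -μ; (2 - r) * μ⁻¹, r - 1] with hEc
  have hC : A μ * (B μ r)⁻¹ = Cc := by
    rw [Binv μ r hμ, A, hCc]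
    ext i j
    fin_cases i <;> fin_cases j <;>
      simp [Matrix.mul_apply, Fin.sum_univ_two, hμ] <;> (try field_simp) <;> (try ring)
  have hD : (A μ)⁻¹ * B μ r = Dc := by
    rw [Ainv μ hμ, B, hDc]
    ext i j
    fin_cases i <;> fin_cases j <;>
      simp [Matrix.mul_apply, Fin.sum_univ_two, hμ] <;> (try field_simp) <;> (try ring)
  have hE : B μ r * (A μ)⁻¹ = Ec := by
    rw [Ainv μ hμ, B, hEc]
    ext i j
    fin_cases i <;> fin_cases j <;>
      simp [Matrix.mul_apply, Fin.sum_univ_two, hμ] <;> (try field_simp) <;> (try ring)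
  have hC2 : (A μ * (B μ r)⁻¹) * (A μ * (B μ r)⁻¹) = r • (A μ * (B μ r)⁻¹) - 1 := by
    rw [hC, hCc]
    ext i j
    fin_cases i <;> fin_cases j <;>
      simp [Matrix.mul_apply, Fin.sum_univ_two, Matrix.one_apply, hμ] <;>
      (try field_simp) <;> (try ring)
  have hD2 : ((A μ)⁻¹ * B μ r) * ((A μ)⁻¹ * B μ r) = r • ((A μ)⁻¹ * B μ r) - 1 := by
    rw [hD, hDc]
    ext i j
    fin_cases i <;> fin_cases j <;>
      simp [Matrix.mul_apply, Fin.sum_univ_two, Matrix.one_apply, hμ] <;>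
      (try field_simp) <;> (try ring)
  have t1 : Matrix.trace (Cc * (Dc * Ec)) = r := by
    rw [hCc, hDc, hEc]
    simp only [Matrix.trace_fin_two, Matrix.mul_apply, Fin.sum_univ_two,
      Matrix.cons_val', Matrix.cons_val_zero, Matrix.cons_val_one, Matrix.head_cons,
      Matrix.empty_val', Matrix.cons_val_fin_one, Matrix.head_fin_const, Matrix.of_apply]
    field_simp
    ring
  have t2 : Matrix.trace (Cc * Ec) = 2 := by
    rw [hCc, hEc]
    simp only [Matrix.trace_fin_two, Matrix.mul_apply, Fin.sum_univ_two,
      Matrix.cons_val', Matrix.cons_val_zero, Matrix.cons_val_one, Matrix.head_cons,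
      Matrix.empty_val', Matrix.cons_val_fin_one, Matrix.head_fin_const, Matrix.of_apply]
    field_simp
    ring
  have t3 : Matrix.trace (Dc * Ec) = 2 * (r - 1) - (2 - r) * (μ ^ 2 + μ⁻¹ ^ 2) := by
    rw [hDc, hEc]
    simp only [Matrix.trace_fin_two, Matrix.mul_apply, Fin.sum_univ_two,
      Matrix.cons_val', Matrix.cons_val_zero, Matrix.cons_val_one, Matrix.head_cons,
      Matrix.empty_val', Matrix.cons_val_fin_one, Matrix.head_fin_const, Matrix.of_apply]
    field_simp
    ring
  have t4 : Matrix.trace Ec = r := by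
    rw [hEc, Matrix.trace_fin_two]
    norm_num
    try ring
  have hW : W (m + 1) μ r * B μ r * (A μ)⁻¹
      = (b * b) • (Cc * (Dc * Ec)) - (a * b) • (Cc * Ec) - (a * b) • (Dc * Ec)
        + (a * a) • Ec := by
    rw [W, pow_formula _ r hC2 m, pow_formula _ r hD2 m, hC, hD, mul_assoc,
      mul_assoc, hE]
    exact expand4 a b Cc Dc Ec
  rw [hW]
  simp only [Matrix.trace_add, Matrix.trace_sub, Matrix.trace_smul, t1, t2, t3, t4,
    smul_eq_mul]
  linear_combination r * key - 2 * (2 - r) * a * b * hμ2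
end
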